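/- Let 𝒞 be a finite set of constructive formulas and let G = CK+𝒞 be either T-free or T-full. Then the logic of G admits all Visser's rules: for any finite (possibly empty) family of formulas {(A_i, B_i)}_{i∈I} and any formulas C, D, if G proves (⇒ ⋀_{i∈I}(A_i → B_i) → (C ∨ D)), then G proves (⇒ ⋀_{i∈I}(A_i → B_i) → C), or (⇒ ⋀_{i∈I}(A_i → B_i) → D), or (⇒ ⋀_{i∈I}(A_i → B_i) → A_i) for some i ∈ I. In particular (taking I = ∅), if G proves (⇒ C ∨ D) then G proves (⇒ C) or (⇒ D). -/

import Mathlib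

set_option autoImplicit false

namespace UPT

/-- Modal formulas over atoms of type `α` (the language `ℒ = {∧,∨,→,⊤,⊥,□,◇}`). -/
inductive Fml (α : Type) : Type where
  | atom : α → Fml α
  | top  : Fml α
  | bot  : Fml α
  | and  : Fml α → Fml α → Fml α
  | or   : Fml α → Fml α → Fml α
  | imp  : Fml α → Fml α → Fml α
  | box  : Fml α → Fml α
  | dia  : Fml α → Fml α
deriving DecidableEq

variable {α β : Type}

/-- Simultaneous substitution of formulas for atoms. -/
def Fml.subst (σ : β → Fml α) : Fml β → Fml α
  | .atom b  => σ b
  | .top     => .top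
  | .bot     => .bot
  | .and A B => .and (A.subst σ) (B.subst σ)
  | .or A B  => .or (A.subst σ) (B.subst σ)
  | .imp A B => .imp (A.subst σ) (B.subst σ)
  | .box A   => .box (A.subst σ)
  | .dia A   => .dia (A.subst σ)

/-- A sequent: a finite multiset antecedent together with a succedent
containing at most one formula. -/
abbrev Seq (α : Type) : Type := Multiset (Fml α) × Option (Fml α)

/-- A rule set relates a (finite) list of premise sequents to a conclusion sequent. -/
abbrev RuleSet (α : Type) : Type := List (Seq α) → Seq α → Prop

/-- The axioms and rules of the single-conclusion sequent calculus `LJ`, stated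
schematically: they are closed under substituting arbitrary formulas for atoms
and arbitrary multisets (resp. succedents) for the context variables. -/
inductive LJRule : List (Seq α) → Seq α → Prop where
  | id (Γ : Multiset (Fml α)) (A : Fml α) : LJRule [] (A ::ₘ Γ, some A)
  | botL (Γ : Multiset (Fml α)) (Δ : Option (Fml α)) : LJRule [] (.bot ::ₘ Γ, Δ)
  | topR (Γ : Multiset (Fml α)) : LJRule [] (Γ, some .top)
  | wL (A : Fml α) (Γ : Multiset (Fml α)) (Δ : Option (Fml α)) :
      LJRule [(Γ, Δ)] (A ::ₘ Γ, Δ)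
  | wR (A : Fml α) (Γ : Multiset (Fml α)) : LJRule [(Γ, none)] (Γ, some A)
  | cL (A : Fml α) (Γ : Multiset (Fml α)) (Δ : Option (Fml α)) :
      LJRule [(A ::ₘ A ::ₘ Γ, Δ)] (A ::ₘ Γ, Δ)
  | cut (A : Fml α) (Γ : Multiset (Fml α)) (Δ : Option (Fml α)) :
      LJRule [(Γ, some A), (A ::ₘ Γ, Δ)] (Γ, Δ)
  | andL₁ (A B : Fml α) (Γ : Multiset (Fml α)) (Δ : Option (Fml α)) :
      LJRule [(A ::ₘ Γ, Δ)] (.and A B ::ₘ Γ, Δ)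
  | andL₂ (A B : Fml α) (Γ : Multiset (Fml α)) (Δ : Option (Fml α)) :
      LJRule [(B ::ₘ Γ, Δ)] (.and A B ::ₘ Γ, Δ)
  | andR (A B : Fml α) (Γ : Multiset (Fml α)) :
      LJRule [(Γ, some A), (Γ, some B)] (Γ, some (.and A B))
  | orL (A B : Fml α) (Γ : Multiset (Fml α)) (Δ : Option (Fml α)) :
      LJRule [(A ::ₘ Γ, Δ), (B ::ₘ Γ, Δ)] (.or A B ::ₘ Γ, Δ)
  | orR₁ (A B : Fml α) (Γ : Multiset (Fml α)) : LJRule [(Γ, some A)] (Γ, some (.or A B))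
  | orR₂ (A B : Fml α) (Γ : Multiset (Fml α)) : LJRule [(Γ, some B)] (Γ, some (.or A B))
  | impL (A B : Fml α) (Γ : Multiset (Fml α)) (Δ : Option (Fml α)) :
      LJRule [(Γ, some A), (B ::ₘ Γ, Δ)] (.imp A B ::ₘ Γ, Δ)
  | impR (A B : Fml α) (Γ : Multiset (Fml α)) :
      LJRule [(A ::ₘ Γ, some B)] (Γ, some (.imp A B))

/-- The rule `K_□`: from `Γ ⇒ A` infer `□Γ ⇒ □A`. -/
inductive KBoxRule : List (Seq α) → Seq α → Prop where
  | mk (Γ : Multiset (Fml α)) (A : Fml α) :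
      KBoxRule [(Γ, some A)] (Γ.map Fml.box, some (.box A))

/-- The rule `K_◇`: from `Γ, A ⇒ B` infer `□Γ, ◇A ⇒ ◇B`. -/
inductive KDiaRule : List (Seq α) → Seq α → Prop where
  | mk (Γ : Multiset (Fml α)) (A B : Fml α) :
      KDiaRule [(A ::ₘ Γ, some B)] (.dia A ::ₘ Γ.map Fml.box, some (.dia B))

/-- The rule `◇L`: from `Γ, A ⇒ B` infer `Γ, ◇A ⇒ ◇B`. -/
inductive DiaLRule : List (Seq α) → Seq α → Prop where
  | mk (Γ : Multiset (Fml α)) (A B : Fml α) :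
      DiaLRule [(A ::ₘ Γ, some B)] (.dia A ::ₘ Γ, some (.dia B))

/-- Adding a set `Ax` of axioms to a calculus: the initial sequents `⇒ σ(A)`
for every substitution instance `σ(A)` of every `A ∈ Ax`. -/
def axRule (Ax : Fml α → Prop) : RuleSet α := fun ps c =>
  ps = [] ∧ ∃ (A : Fml α) (σ : α → Fml α), Ax A ∧ c = ((0 : Multiset (Fml α)), some (A.subst σ))

/-- Using a set of sequents as additional initial sequents (assumptions). -/
def hypRule (H : Set (Seq α)) : RuleSet α := fun ps c => ps = [] ∧ c ∈ H

/-- The sequent calculus `LJ+Ax`. -/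
def LJSys (Ax : Fml α → Prop) : RuleSet α := fun ps c => LJRule ps c ∨ axRule Ax ps c

/-- The sequent calculus `CK+Ax = LJ + K_□ + K_◇ + Ax`. -/
def CKSys (Ax : Fml α → Prop) : RuleSet α := fun ps c =>
  LJRule ps c ∨ KBoxRule ps c ∨ KDiaRule ps c ∨ axRule Ax ps c

/-- The sequent calculus `CK_□+Ax = LJ + K_□ + Ax`. -/
def CKBoxSys (Ax : Fml α → Prop) : RuleSet α := fun ps c =>
  LJRule ps c ∨ KBoxRule ps c ∨ axRule Ax ps c

/-- The sequent calculus `BLL+Ax = LJ + ◇L + Ax`. -/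
def BLLSys (Ax : Fml α → Prop) : RuleSet α := fun ps c =>
  LJRule ps c ∨ DiaLRule ps c ∨ axRule Ax ps c

/-- Provability of a sequent in the calculus generated by a rule set. -/
inductive Derives (R : RuleSet α) : Multiset (Fml α) → Option (Fml α) → Prop where
  | step {ps : List (Seq α)} {c : Seq α} (hr : R ps c)
      (hp : ∀ p ∈ ps, Derives R p.1 p.2) : Derives R c.1 c.2

/-- Basic formulas: generated from atoms, `⊤`, `⊥` by `∧`, `∨`, `◇`. -/
inductive Basic : Fml α → Prop where
  | atom (a : α) : Basic (.atom a)
  | top : Basic (.top : Fml α)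
  | bot : Basic (.bot : Fml α)
  | and {A B : Fml α} : Basic A → Basic B → Basic (.and A B)
  | or {A B : Fml α} : Basic A → Basic B → Basic (.or A B)
  | dia {A : Fml α} : Basic A → Basic (.dia A)

/-- Almost positive formulas: generated from basic formulas by `∧`, `∨`, `□`, `◇`
and implications `A → B` with `A` basic and `B` almost positive. -/
inductive AlmostPos : Fml α → Prop where
  | basic {A : Fml α} : Basic A → AlmostPos A
  | and {A B : Fml α} : AlmostPos A → AlmostPos B → AlmostPos (.and A B)
  | or {A B : Fml α} : AlmostPos A → AlmostPos B → AlmostPos (.or A B)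
  | box {A : Fml α} : AlmostPos A → AlmostPos (.box A)
  | dia {A : Fml α} : AlmostPos A → AlmostPos (.dia A)
  | imp {A B : Fml α} : Basic A → AlmostPos B → AlmostPos (.imp A B)

/-- Constructive formulas: generated from basic formulas by `∧`, `□` and
implications `A → B` with `A` almost positive and `B` constructive. -/
inductive Constructive : Fml α → Prop where
  | basic {A : Fml α} : Basic A → Constructive A
  | and {A B : Fml α} : Constructive A → Constructive B → Constructive (.and A B)
  | box {A : Fml α} : Constructive A → Constructive (.box A)
  | imp {A B : Fml α} : AlmostPos A → Constructive B → Constructive (.imp A B)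

/-- Harrop formulas: atoms, `⊥`, `⊤`, closed under `∧`, `□`, and implications
`A → B` with `A` arbitrary and `B` Harrop. -/
inductive Harrop : Fml α → Prop where
  | atom (a : α) : Harrop (.atom a)
  | top : Harrop (.top : Fml α)
  | bot : Harrop (.bot : Fml α)
  | and {A B : Fml α} : Harrop A → Harrop B → Harrop (.and A B)
  | box {A : Fml α} : Harrop A → Harrop (.box A)
  | imp (A : Fml α) {B : Fml α} : Harrop B → Harrop (.imp A B)

/-- Conjunction of a list of formulas (`⋀∅ = ⊤`). -/
def conj : List (Fml α) → Fml α
  | [] => .top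
  | [A] => A
  | A :: B :: l => .and A (conj (B :: l))

/-- Disjunction of a list of formulas (`⋁∅ = ⊥`). -/
def disj : List (Fml α) → Fml α
  | [] => .bot
  | [A] => A
  | A :: B :: l => .or A (disj (B :: l))

/-- Disjunction of a succedent (at most one formula; `⋁∅ = ⊥`). -/
def odisj : Option (Fml α) → Fml α
  | none => .bot
  | some A => A

/-- The multiset `{A_i → B_i}_{i ∈ I}` of implications of an indexed family. -/
def imps (AB : List (Fml α × Fml α)) : Multiset (Fml α) :=
  ↑(AB.map fun p => Fml.imp p.1 p.2)

/-- The conjunction `⋀_{i∈I} (A_i → B_i)` of an indexed family of implications. -/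
def impConj (AB : List (Fml α × Fml α)) : Fml α :=
  conj (AB.map fun p => Fml.imp p.1 p.2)

/-- Truth in the one-node *irreflexive* frame `𝒦ᵢ` under a Boolean valuation:
`□A` is always true and `◇A` is always false; the propositional connectives
are evaluated classically. -/
def evalI (v : α → Bool) : Fml α → Bool
  | .atom a  => v a
  | .top     => true
  | .bot     => false
  | .and A B => evalI v A && evalI v B
  | .or A B  => evalI v A || evalI v B
  | .imp A B => !evalI v A || evalI v B
  | .box _   => true
  | .dia _   => false

/-- Truth in the one-node *reflexive* frame `𝒦ᵣ` under a Boolean valuation: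
`□A` and `◇A` take the value of `A`. -/
def evalR (v : α → Bool) : Fml α → Bool
  | .atom a  => v a
  | .top     => true
  | .bot     => false
  | .and A B => evalR v A && evalR v B
  | .or A B  => evalR v A || evalR v B
  | .imp A B => !evalR v A || evalR v B
  | .box A   => evalR v A
  | .dia A   => evalR v A

/-- Validity of a sequent with respect to a one-node semantics: under every
valuation, if all formulas of the antecedent are true then so is the succedent. -/
def SeqValid (ev : (α → Bool) → Fml α → Bool) (Γ : Multiset (Fml α)) (Δ : Option (Fml α)) :
    Prop :=
  ∀ v : α → Bool, (∀ A ∈ Γ, ev v A = true) → ∃ B ∈ Δ, ev v B = true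

/-- `CK+Ax` is T-free: every provable sequent is valid in the irreflexive node frame. -/
def TFree (Ax : Fml α → Prop) : Prop :=
  ∀ (Γ : Multiset (Fml α)) (Δ : Option (Fml α)), Derives (CKSys Ax) Γ Δ → SeqValid evalI Γ Δ

/-- `CK+Ax` is T-full: every provable sequent is valid in the reflexive node
frame and the calculus proves `⇒ □p → p` and `⇒ p → ◇p`. -/
def TFull (Ax : Fml α → Prop) : Prop :=
  (∀ (Γ : Multiset (Fml α)) (Δ : Option (Fml α)), Derives (CKSys Ax) Γ Δ → SeqValid evalR Γ Δ) ∧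
  (∀ a : α, Derives (CKSys Ax) 0 (some (.imp (.box (.atom a)) (.atom a)))) ∧
  (∀ a : α, Derives (CKSys Ax) 0 (some (.imp (.atom a) (.dia (.atom a)))))

/-- Classical validity of a (modality-free) sequent: `⋀Γ → ⋁Δ` is true under
every Boolean valuation of the atoms. -/
def ClValid (Γ : Multiset (Fml α)) (Δ : Option (Fml α)) : Prop :=
  ∀ v : α → Bool, (∀ A ∈ Γ, evalI v A = true) → ∃ B ∈ Δ, evalI v B = true

/-- Nonempty conjunctions of atoms. -/
inductive AtomConj : Fml α → Prop where
  | single (a : α) : AtomConj (.atom a)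
  | and {A B : Fml α} : AtomConj A → AtomConj B → AtomConj (.and A B)

/-- Implicational Horn formulas: `⊥`, atoms, and implications `⋀Q → r` with `Q`
a nonempty multiset of atoms and `r` an atom or `⊥`. -/
inductive ImpHorn : Fml α → Prop where
  | bot : ImpHorn (.bot : Fml α)
  | atom (a : α) : ImpHorn (.atom a)
  | impAtom {A : Fml α} (hA : AtomConj A) (a : α) : ImpHorn (.imp A (.atom a))
  | impBot {A : Fml α} (hA : AtomConj A) : ImpHorn (.imp A .bot)

/-- Formulas of the form `◇^n p` with `p` an atom and `n ≥ 0`. -/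
inductive DiaPowAtom : Fml α → Prop where
  | atom (a : α) : DiaPowAtom (.atom a)
  | dia {A : Fml α} : DiaPowAtom A → DiaPowAtom (.dia A)

/-- Nonempty conjunctions `⋀_{i=1}^k ◇^{n_i} p_i` of formulas `◇^{n_i} p_i`. -/
inductive DiaConj : Fml α → Prop where
  | single {A : Fml α} : DiaPowAtom A → DiaConj A
  | and {A B : Fml α} : DiaConj A → DiaConj B → DiaConj (.and A B)

/-- Modal Horn formulas: `⊥` and atoms, closed under `□` and under implications
`A → B` with `A = ⋀_{i=1}^k ◇^{n_i} p_i` and `B` modal Horn. -/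
inductive ModalHorn : Fml α → Prop where
  | bot : ModalHorn (.bot : Fml α)
  | atom (a : α) : ModalHorn (.atom a)
  | box {A : Fml α} : ModalHorn A → ModalHorn (.box A)
  | imp {A B : Fml α} : DiaConj A → ModalHorn B → ModalHorn (.imp A B)

/-- The predicate "all atoms of the formula satisfy `P`". -/
def Fml.AtomsIn (P : α → Prop) : Fml α → Prop
  | .atom a  => P a
  | .top     => True
  | .bot     => True
  | .and A B => A.AtomsIn P ∧ B.AtomsIn P
  | .or A B  => A.AtomsIn P ∧ B.AtomsIn P
  | .imp A B => A.AtomsIn P ∧ B.AtomsIn P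
  | .box A   => A.AtomsIn P
  | .dia A   => A.AtomsIn P

/-- No `◇` occurs in the formula. -/
def Fml.DiaFree : Fml α → Prop
  | .atom _  => True
  | .top     => True
  | .bot     => True
  | .and A B => A.DiaFree ∧ B.DiaFree
  | .or A B  => A.DiaFree ∧ B.DiaFree
  | .imp A B => A.DiaFree ∧ B.DiaFree
  | .box A   => A.DiaFree
  | .dia _   => False

/-- No `□` occurs in the formula. -/
def Fml.BoxFree : Fml α → Prop
  | .atom _  => True
  | .top     => True
  | .bot     => True
  | .and A B => A.BoxFree ∧ B.BoxFree
  | .or A B  => A.BoxFree ∧ B.BoxFree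
  | .imp A B => A.BoxFree ∧ B.BoxFree
  | .box _   => False
  | .dia A   => A.BoxFree

/-- The formula is modality-free (propositional). -/
def Fml.ModFree : Fml α → Prop
  | .atom _  => True
  | .top     => True
  | .bot     => True
  | .and A B => A.ModFree ∧ B.ModFree
  | .or A B  => A.ModFree ∧ B.ModFree
  | .imp A B => A.ModFree ∧ B.ModFree
  | .box _   => False
  | .dia _   => False

/-- An angling of the language: an injection `φ ↦ ⟨φ⟩` from formulas into the
atoms whose image (the angled atoms) is disjoint from a fixed infinite set of
plain atoms. -/
structure Angling (α : Type) where
  angle : Fml α → α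
  plain : Set α
  inj : Function.Injective angle
  plain_infinite : plain.Infinite
  disjoint : ∀ φ : Fml α, angle φ ∉ plain

/-- `a` is an angled atom. -/
def Angling.Angled (S : Angling α) (a : α) : Prop := ∃ φ : Fml α, S.angle φ = a

/-- The translation `t`: `⊥^t = ⊥`, `p^t = ⟨p⟩`, `⊤^t = ⟨⊤⟩`,
`(A ∘ B)^t = (A^t ∘ B^t) ∧ ⟨A ∘ B⟩` and `(○A)^t = (○A^t) ∧ ⟨○A⟩`. -/
def Angling.tr (S : Angling α) : Fml α → Fml α
  | .atom a  => .atom (S.angle (.atom a))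
  | .top     => .atom (S.angle .top)
  | .bot     => .bot
  | .and A B => .and (.and (S.tr A) (S.tr B)) (.atom (S.angle (.and A B)))
  | .or A B  => .and (.or (S.tr A) (S.tr B)) (.atom (S.angle (.or A B)))
  | .imp A B => .and (.imp (S.tr A) (S.tr B)) (.atom (S.angle (.imp A B)))
  | .box A   => .and (.box (S.tr A)) (.atom (S.angle (.box A)))
  | .dia A   => .and (.dia (S.tr A)) (.atom (S.angle (.dia A)))

/-- Action of the standard substitution on atoms: an angled atom `⟨φ⟩` is sent
to `φ`; plain atoms are fixed. -/
noncomputable def Angling.stdAtom (S : Angling α) (a : α) : Fml α :=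
  haveI := Classical.propDecidable (∃ φ : Fml α, S.angle φ = a)
  if h : ∃ φ : Fml α, S.angle φ = a then h.choose else .atom a

/-- The standard substitution `s`: replaces each angled atom `⟨φ⟩` by `φ`,
fixes the plain atoms, and commutes with all connectives. -/
noncomputable def Angling.std (S : Angling α) : Fml α → Fml α :=
  Fml.subst S.stdAtom

/-- The Visser–Harrop property of a calculus. -/
def VisserHarrop (R : RuleSet α) : Prop :=
  ∀ (Γ : Multiset (Fml α)), (∀ A ∈ Γ, Harrop A) →
  ∀ (AB : List (Fml α × Fml α)) (C D : Fml α),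
    Derives R (Γ + imps AB) (some (.or C D)) →
    Derives R (Γ + imps AB) (some C) ∨
    Derives R (Γ + imps AB) (some D) ∨
    ∃ p ∈ AB, Derives R (Γ + imps AB) (some p.1)

/-- The disjunction property of a calculus. -/
def DisjProp (R : RuleSet α) : Prop :=
  ∀ C D : Fml α, Derives R 0 (some (.or C D)) →
    Derives R 0 (some C) ∨ Derives R 0 (some D)

/-- The formula interpretation `I(Γ ⇒ Δ) = ⋀Γ → ⋁Δ` belongs to `L` (stated for
every enumeration of the antecedent multiset as a list). -/
def interpIn (L : Set (Fml α)) (s : Seq α) : Prop :=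
  ∀ l : List (Fml α), (↑l : Multiset (Fml α)) = s.1 → Fml.imp (conj l) (odisj s.2) ∈ L

/- Named modal axioms (with `p := atom 0`, `q := atom 1`). -/
def axTa : Fml ℕ := .imp (.box (.atom 0)) (.atom 0)
def axTb : Fml ℕ := .imp (.atom 0) (.dia (.atom 0))
def axBa : Fml ℕ := .imp (.dia (.box (.atom 0))) (.atom 0)
def axBb : Fml ℕ := .imp (.atom 0) (.box (.dia (.atom 0)))
def ax4a : Fml ℕ := .imp (.box (.atom 0)) (.box (.box (.atom 0)))
def ax4b : Fml ℕ := .imp (.dia (.dia (.atom 0))) (.dia (.atom 0))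
def ax5a : Fml ℕ := .imp (.dia (.box (.atom 0))) (.box (.atom 0))
def ax5b : Fml ℕ := .imp (.dia (.atom 0)) (.box (.dia (.atom 0)))
def axDiaBot : Fml ℕ := .imp (.dia .bot) .bot
def axDiaOr : Fml ℕ :=
  .imp (.dia (.or (.atom 0) (.atom 1))) (.or (.dia (.atom 0)) (.dia (.atom 1)))
def axBoxImp : Fml ℕ :=
  .imp (.imp (.dia (.atom 0)) (.box (.atom 1))) (.box (.imp (.atom 0) (.atom 1)))

/-- The axioms of `X ⊆ {T, B, 4, 5}` in both their `a`- and `b`-versions. -/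
def XAxioms (tT tB t4 t5 : Bool) : Set (Fml ℕ) :=
  (if tT then ({axTa, axTb} : Set (Fml ℕ)) else ∅) ∪
  (if tB then ({axBa, axBb} : Set (Fml ℕ)) else ∅) ∪
  (if t4 then ({ax4a, ax4b} : Set (Fml ℕ)) else ∅) ∪
  (if t5 then ({ax5a, ax5b} : Set (Fml ℕ)) else ∅)

/-- The additional axioms of `IK` over `CK`. -/
def IKExtra : Set (Fml ℕ) := {axDiaBot, axDiaOr, axBoxImp}

/-- The right rule with premises `{Γ, φ̄_i ⇒ ψ̄_i}_{i∈I}` and conclusion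
`Γ, θ̄ ⇒ η̄`, closed under all substitutions of formulas for atoms and
multisets for the context `Γ`. -/
def rightRuleInst (prems : List (List (Fml α) × Option (Fml α)))
    (θ : List (Fml α)) (η : Option (Fml α)) : RuleSet α := fun ps c =>
  ∃ (σ : α → Fml α) (Γ : Multiset (Fml α)),
    ps = prems.map (fun pr =>
        ((Γ + ↑(pr.1.map (Fml.subst σ)) : Multiset (Fml α)), pr.2.map (Fml.subst σ))) ∧
    c = ((Γ + ↑(θ.map (Fml.subst σ)) : Multiset (Fml α)), η.map (Fml.subst σ))

/-- The left rule with premises `{Γ, φ̄_i ⇒ ψ̄_i}_{i∈I} ∪ {Γ, θ̄_j ⇒ Δ}_{j∈J}`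
and conclusion `Γ, η̄ ⇒ Δ`, closed under all substitutions of formulas for
atoms and multisets for `Γ` and `Δ`. -/
def leftRuleInst (prems : List (List (Fml α) × Option (Fml α)))
    (lefts : List (List (Fml α))) (η : List (Fml α)) : RuleSet α := fun ps c =>
  ∃ (σ : α → Fml α) (Γ : Multiset (Fml α)) (Δ : Option (Fml α)),
    ps = prems.map (fun pr =>
          ((Γ + ↑(pr.1.map (Fml.subst σ)) : Multiset (Fml α)), pr.2.map (Fml.subst σ)))
        ++ lefts.map (fun θj => ((Γ + ↑(θj.map (Fml.subst σ)) : Multiset (Fml α)), Δ)) ∧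
    c = ((Γ + ↑(η.map (Fml.subst σ)) : Multiset (Fml α)), Δ)

/-- The formula `Ax_R` of a right rule. -/
def AxRight (prems : List (List (Fml α) × Option (Fml α)))
    (θ : List (Fml α)) (η : Option (Fml α)) : Fml α :=
  .imp (.and (conj (prems.map fun pr => .imp (conj pr.1) (odisj pr.2))) (conj θ)) (odisj η)

/-- The formula `Ax_R` of a left rule. -/
def AxLeft (prems : List (List (Fml α) × Option (Fml α)))
    (lefts : List (List (Fml α))) (η : List (Fml α)) : Fml α :=
  .imp (.and (conj (prems.map fun pr => .imp (conj pr.1) (odisj pr.2))) (conj η))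
    (disj (lefts.map conj))

/-- The forgetful translation `f_i`: fixes atoms, `⊤`, `⊥`, commutes with
`∧`, `∨`, `→`, `□`, and sends every `◇A` to `⊥`. -/
def fi : Fml α → Fml α
  | .atom a  => .atom a
  | .top     => .top
  | .bot     => .bot
  | .and A B => .and (fi A) (fi B)
  | .or A B  => .or (fi A) (fi B)
  | .imp A B => .imp (fi A) (fi B)
  | .box A   => .box (fi A)
  | .dia _   => .bot

/-- The forgetful translation `f_r`: fixes atoms, `⊤`, `⊥`, commutes with
`∧`, `∨`, `→`, `□`, and sends `◇A` to `f_r A`. -/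
def fr : Fml α → Fml α
  | .atom a  => .atom a
  | .top     => .top
  | .bot     => .bot
  | .and A B => .and (fr A) (fr B)
  | .or A B  => .or (fr A) (fr B)
  | .imp A B => .imp (fr A) (fr B)
  | .box A   => .box (fr A)
  | .dia A   => fr A

/-!
Let `T = {A_i → B_i}`. Aczel's slash relative to `T`, with the clauses for `□` and `◇` read off
the one-node frame (a consistent `T` slashes no `◇A` in the irreflexive case; `□A` and `◇A` need
the slash of `A` in the reflexive case), is preserved by every rule of `CK`. Every instance `A σ`
of a constructive axiom is slashed: under the valuation `p ↦ (T slashes σ p)`, basic formulas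
are slashed iff true and almost positive ones are true when slashed, so a derivable constructive
formula that is true is slashed; and `A` is true because its instance with `⊤`/`⊥` is derivable,
hence valid in the frame. Now if every `A_i → B_i` is slashed, so is `C ∨ D`, and a slashed
formula is derivable from `T`; otherwise some `A_i` is slashed.
-/

class ExtendsLJ (R : RuleSet α) : Prop where
  ljRule : ∀ {ps : List (Seq α)} {c : Seq α}, LJRule ps c → R ps c

instance {Ax : Fml α → Prop} : ExtendsLJ (CKSys Ax) := ⟨Or.inl⟩

namespace Derives

variable {R : RuleSet α} [ExtendsLJ R] {Γ Γ₁ Γ₂ S T : Multiset (Fml α)}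
  {Δ Δ₁ Δ₂ : Option (Fml α)} {A B : Fml α}

theorem of_lj₀ (hr : LJRule [] (Γ, Δ)) : Derives R Γ Δ :=
  .step (c := (Γ, Δ)) (ExtendsLJ.ljRule hr) (by simp)

theorem of_lj₁ (hr : LJRule [(Γ₁, Δ₁)] (Γ, Δ)) (h : Derives R Γ₁ Δ₁) : Derives R Γ Δ :=
  .step (c := (Γ, Δ)) (ExtendsLJ.ljRule hr) (by simpa using h)

theorem of_lj₂ (hr : LJRule [(Γ₁, Δ₁), (Γ₂, Δ₂)] (Γ, Δ)) (h₁ : Derives R Γ₁ Δ₁)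
    (h₂ : Derives R Γ₂ Δ₂) : Derives R Γ Δ :=
  .step (c := (Γ, Δ)) (ExtendsLJ.ljRule hr) (by simp [h₁, h₂])

theorem of_mem (h : A ∈ Γ) : Derives R Γ (some A) := by
  obtain ⟨Γ', rfl⟩ := Multiset.exists_cons_of_mem h
  exact of_lj₀ (.id Γ' A)

theorem top : Derives R Γ (some .top) := of_lj₀ (.topR Γ)

theorem weaken_cons (A : Fml α) (h : Derives R Γ Δ) : Derives R (A ::ₘ Γ) Δ :=
  of_lj₁ (.wL A Γ Δ) h

theorem weaken_add (S : Multiset (Fml α)) (h : Derives R Γ Δ) : Derives R (S + Γ) Δ := by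
  induction S using Multiset.induction with
  | empty => simpa using h
  | cons A S ih => simpa using weaken_cons A ih

theorem weaken_zero (h : Derives R 0 Δ) : Derives R T Δ := by
  simpa using weaken_add T h

theorem cut (h₁ : Derives R Γ (some A)) (h₂ : Derives R (A ::ₘ Γ) Δ) : Derives R Γ Δ :=
  of_lj₂ (.cut A Γ Δ) h₁ h₂

theorem exfalso (h : Derives R Γ (some .bot)) : Derives R Γ Δ :=
  cut h (of_lj₀ (.botL Γ Δ))

theorem mp (h₁ : Derives R Γ (some (.imp A B))) (h₂ : Derives R Γ (some A)) :
    Derives R Γ (some B) :=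
  cut h₁ (of_lj₂ (.impL A B Γ (some B)) h₂ (of_lj₀ (.id Γ B)))

theorem imp_intro (h : Derives R (A ::ₘ Γ) (some B)) : Derives R Γ (some (.imp A B)) :=
  of_lj₁ (.impR A B Γ) h

theorem and_intro (h₁ : Derives R Γ (some A)) (h₂ : Derives R Γ (some B)) :
    Derives R Γ (some (.and A B)) :=
  of_lj₂ (.andR A B Γ) h₁ h₂

theorem and_left (h : Derives R Γ (some (.and A B))) : Derives R Γ (some A) :=
  cut h (of_lj₁ (.andL₁ A B Γ (some A)) (of_lj₀ (.id Γ A)))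

theorem and_right (h : Derives R Γ (some (.and A B))) : Derives R Γ (some B) :=
  cut h (of_lj₁ (.andL₂ A B Γ (some B)) (of_lj₀ (.id Γ B)))

theorem or_inl (h : Derives R Γ (some A)) : Derives R Γ (some (.or A B)) :=
  of_lj₁ (.orR₁ A B Γ) h

theorem or_inr (h : Derives R Γ (some B)) : Derives R Γ (some (.or A B)) :=
  of_lj₁ (.orR₂ A B Γ) h

theorem cut_add (hS : ∀ A ∈ S, Derives R T (some A)) (h : Derives R (T + S) Δ) :
    Derives R T Δ := by
  induction S using Multiset.induction with
  | empty => simpa using h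
  | cons A S ih =>
    rw [Multiset.add_cons] at h
    have hA : Derives R (T + S) (some A) := by
      simpa [add_comm] using weaken_add S (hS A (Multiset.mem_cons_self A S))
    exact ih (fun B hB => hS B (Multiset.mem_cons_of_mem hB)) (cut hA h)

theorem cut_antecedent (h : Derives R Γ Δ) (hΓ : ∀ A ∈ Γ, Derives R T (some A)) :
    Derives R T Δ :=
  cut_add hΓ (by simpa [add_comm] using weaken_add T h)

theorem conj_intro (l : List (Fml α)) (h : ∀ A ∈ l, Derives R Γ (some A)) :
    Derives R Γ (some (conj l)) := by
  induction l with
  | nil => exact top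
  | cons A l ih =>
    cases l with
    | nil => exact h A (List.mem_singleton_self A)
    | cons B l =>
      exact and_intro (h A List.mem_cons_self)
        (ih fun C hC => h C (List.mem_cons_of_mem A hC))

theorem of_mem_conj {l : List (Fml α)} (h : A ∈ l) : Derives R {conj l} (some A) := by
  induction l with
  | nil => cases h
  | cons B l ih =>
    cases l with
    | nil =>
      obtain rfl := List.mem_singleton.mp h
      exact of_mem (Multiset.mem_singleton_self A)
    | cons C l =>
      rcases List.mem_cons.mp h with rfl | h
      · exact of_lj₁ (.andL₁ A (conj (C :: l)) 0 (some A)) (of_mem (Multiset.mem_singleton_self A))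
      · exact of_lj₁ (.andL₂ B (conj (C :: l)) 0 (some A)) (ih h)

end Derives

theorem derives_imps_iff {R : RuleSet α} [ExtendsLJ R] (AB : List (Fml α × Fml α)) (X : Fml α) :
    Derives R (imps AB) (some X) ↔ Derives R 0 (some (.imp (impConj AB) X)) := by
  refine ⟨fun h => .imp_intro (h.cut_antecedent fun Y hY => ?_), fun h => ?_⟩
  · exact Derives.of_mem_conj (Multiset.mem_coe.mp hY)
  · exact (Derives.weaken_zero h).mp
      (Derives.conj_intro _ fun Y hY => .of_mem (Multiset.mem_coe.mpr hY))

theorem Fml.subst_subst (σ τ : α → Fml α) (A : Fml α) :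
    (A.subst τ).subst σ = A.subst fun a => (τ a).subst σ := by
  induction A <;> simp [Fml.subst, *]

def Seq.subst (σ : α → Fml α) (s : Seq α) : Seq α :=
  (s.1.map (Fml.subst σ), s.2.map (Fml.subst σ))

theorem LJRule.subst {ps : List (Seq α)} {c : Seq α} (σ : α → Fml α) (h : LJRule ps c) :
    LJRule (ps.map (Seq.subst σ)) (c.subst σ) := by
  cases h <;> simp only [Seq.subst, List.map, Multiset.map_cons, Option.map_some, Fml.subst] <;>
    constructor

theorem CKSys.subst {Ax : Fml α → Prop} {ps : List (Seq α)} {c : Seq α} (σ : α → Fml α)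
    (h : CKSys Ax ps c) : CKSys Ax (ps.map (Seq.subst σ)) (c.subst σ) := by
  rcases h with h | ⟨Γ, A⟩ | ⟨Γ, A, B⟩ | ⟨rfl, A, τ, hA, rfl⟩
  · exact Or.inl (h.subst σ)
  · refine Or.inr (Or.inl ?_)
    simpa [Seq.subst, Fml.subst, Multiset.map_map, Function.comp_def] using
      KBoxRule.mk (Γ.map (Fml.subst σ)) (A.subst σ)
  · refine Or.inr (Or.inr (Or.inl ?_))
    simpa [Seq.subst, Fml.subst, Multiset.map_map, Function.comp_def] using
      KDiaRule.mk (Γ.map (Fml.subst σ)) (A.subst σ) (B.subst σ)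
  · exact Or.inr (Or.inr (Or.inr ⟨rfl, A, fun a => (τ a).subst σ, hA, by
      simp [Seq.subst, Fml.subst_subst]⟩))

theorem Derives.subst {Ax : Fml α → Prop} {Γ : Multiset (Fml α)} {Δ : Option (Fml α)}
    (σ : α → Fml α) (h : Derives (CKSys Ax) Γ Δ) :
    Derives (CKSys Ax) (Γ.map (Fml.subst σ)) (Δ.map (Fml.subst σ)) := by
  induction h with
  | step hr _ ih =>
    refine .step (c := Seq.subst σ _) (hr.subst σ) fun p hp => ?_
    obtain ⟨q, hq, rfl⟩ := List.mem_map.mp hp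
    exact ih q hq

/-- Aczel's slash relative to the theory `T`; `refl` selects the clauses for `□` and `◇` matching
the reflexive (`true`) or irreflexive (`false`) one-node frame. -/
def Slash (Ax : Fml α → Prop) (refl : Bool) (T : Multiset (Fml α)) : Fml α → Prop
  | .atom a => Derives (CKSys Ax) T (some (.atom a))
  | .top => True
  | .bot => Derives (CKSys Ax) T (some .bot)
  | .and A B => Slash Ax refl T A ∧ Slash Ax refl T B
  | .or A B => Slash Ax refl T A ∨ Slash Ax refl T B
  | .imp A B => Derives (CKSys Ax) T (some (.imp A B)) ∧ (Slash Ax refl T A → Slash Ax refl T B)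
  | .box A => Derives (CKSys Ax) T (some (.box A)) ∧ (refl = true → Slash Ax refl T A)
  | .dia A => Derives (CKSys Ax) T (some (.dia A)) ∧
      (if refl then Slash Ax refl T A else Derives (CKSys Ax) T (some .bot))

def SlashOpt (Ax : Fml α → Prop) (refl : Bool) (T : Multiset (Fml α)) :
    Option (Fml α) → Prop
  | none => Derives (CKSys Ax) T (some .bot)
  | some A => Slash Ax refl T A

def SlashValid (Ax : Fml α → Prop) (refl : Bool) (T : Multiset (Fml α))
    (Γ : Multiset (Fml α)) (Δ : Option (Fml α)) : Prop :=
  (∀ A ∈ Γ, Slash Ax refl T A) → SlashOpt Ax refl T Δ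

section Slash

variable {Ax : Fml α → Prop} {refl : Bool} {T : Multiset (Fml α)}

theorem Slash.derives : ∀ {A : Fml α}, Slash Ax refl T A → Derives (CKSys Ax) T (some A)
  | .atom _, h => h
  | .top, _ => .top
  | .bot, h => h
  | .and _ _, h => .and_intro h.1.derives h.2.derives
  | .or _ _, h => h.elim (fun h => .or_inl h.derives) (fun h => .or_inr h.derives)
  | .imp _ _, h => h.1
  | .box _, h => h.1
  | .dia _, h => h.1

theorem Slash.of_inconsistent (hT : Derives (CKSys Ax) T (some .bot)) :
    ∀ A : Fml α, Slash Ax refl T A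
  | .atom _ => .exfalso hT
  | .top => trivial
  | .bot => hT
  | .and A B => ⟨of_inconsistent hT A, of_inconsistent hT B⟩
  | .or A _ => .inl (of_inconsistent hT A)
  | .imp _ B => ⟨.exfalso hT, fun _ => of_inconsistent hT B⟩
  | .box A => ⟨.exfalso hT, fun _ => of_inconsistent hT A⟩
  | .dia A =>
    have hA : Slash Ax refl T A := of_inconsistent hT A
    ⟨.exfalso hT, by cases refl; exacts [hT, hA]⟩

theorem SlashOpt.of_inconsistent (hT : Derives (CKSys Ax) T (some .bot)) :
    ∀ Δ : Option (Fml α), SlashOpt Ax refl T Δ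
  | none => hT
  | some A => Slash.of_inconsistent hT A

theorem derives_of_slash_antecedent {Γ : Multiset (Fml α)} {A : Fml α}
    (h : Derives (CKSys Ax) Γ (some A)) (hΓ : ∀ X ∈ Γ, Slash Ax refl T X) :
    Derives (CKSys Ax) T (some A) :=
  h.cut_antecedent fun X hX => (hΓ X hX).derives

theorem SlashValid.of_ljRule {ps : List (Seq α)} {c : Seq α} (hr : LJRule ps c)
    (hc : Derives (CKSys Ax) c.1 c.2) (hps : ∀ p ∈ ps, SlashValid Ax refl T p.1 p.2) :
    SlashValid Ax refl T c.1 c.2 := by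
  cases hr <;>
    simp only [List.forall_mem_cons, List.not_mem_nil, false_imp_iff, implies_true, and_true]
      at hps <;>
    intro hΓ
  case id Γ A => exact hΓ A (Multiset.mem_cons_self A Γ)
  case botL Γ Δ => exact .of_inconsistent (hΓ .bot (Multiset.mem_cons_self _ Γ)) Δ
  case topR => trivial
  case wL => exact hps (Multiset.forall_mem_cons.mp hΓ).2
  case wR A Γ => exact .of_inconsistent (hps hΓ) A
  case cL =>
    obtain ⟨hA, hΓ⟩ := Multiset.forall_mem_cons.mp hΓ
    exact hps (Multiset.forall_mem_cons.mpr ⟨hA, Multiset.forall_mem_cons.mpr ⟨hA, hΓ⟩⟩)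
  case cut => exact hps.2 (Multiset.forall_mem_cons.mpr ⟨hps.1 hΓ, hΓ⟩)
  case andL₁ =>
    obtain ⟨hAB, hΓ⟩ := Multiset.forall_mem_cons.mp hΓ
    exact hps (Multiset.forall_mem_cons.mpr ⟨hAB.1, hΓ⟩)
  case andL₂ =>
    obtain ⟨hAB, hΓ⟩ := Multiset.forall_mem_cons.mp hΓ
    exact hps (Multiset.forall_mem_cons.mpr ⟨hAB.2, hΓ⟩)
  case andR => exact ⟨hps.1 hΓ, hps.2 hΓ⟩
  case orL =>
    obtain ⟨hA | hB, hΓ⟩ := Multiset.forall_mem_cons.mp hΓ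
    · exact hps.1 (Multiset.forall_mem_cons.mpr ⟨hA, hΓ⟩)
    · exact hps.2 (Multiset.forall_mem_cons.mpr ⟨hB, hΓ⟩)
  case orR₁ => exact Or.inl (hps hΓ)
  case orR₂ => exact Or.inr (hps hΓ)
  case impL =>
    obtain ⟨hAB, hΓ⟩ := Multiset.forall_mem_cons.mp hΓ
    exact hps.2 (Multiset.forall_mem_cons.mpr ⟨hAB.2 (hps.1 hΓ), hΓ⟩)
  case impR =>
    exact ⟨derives_of_slash_antecedent hc hΓ,
      fun hA => hps (Multiset.forall_mem_cons.mpr ⟨hA, hΓ⟩)⟩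

theorem SlashValid.of_kBoxRule {ps : List (Seq α)} {c : Seq α} (hr : KBoxRule ps c)
    (hc : Derives (CKSys Ax) c.1 c.2) (hps : ∀ p ∈ ps, SlashValid Ax refl T p.1 p.2) :
    SlashValid Ax refl T c.1 c.2 := by
  obtain ⟨Γ, A⟩ := hr
  intro hΓ
  refine ⟨derives_of_slash_antecedent hc hΓ, fun hrefl => ?_⟩
  exact hps (Γ, some A) List.mem_cons_self fun X hX =>
    (hΓ (.box X) (Multiset.mem_map_of_mem Fml.box hX)).2 hrefl

theorem SlashValid.of_kDiaRule {ps : List (Seq α)} {c : Seq α} (hr : KDiaRule ps c)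
    (hc : Derives (CKSys Ax) c.1 c.2) (hps : ∀ p ∈ ps, SlashValid Ax refl T p.1 p.2) :
    SlashValid Ax refl T c.1 c.2 := by
  obtain ⟨Γ, A, B⟩ := hr
  intro hΓ
  refine ⟨derives_of_slash_antecedent hc hΓ, ?_⟩
  obtain ⟨⟨-, hA⟩, hΓ⟩ := Multiset.forall_mem_cons.mp hΓ
  cases refl with
  | false => exact hA
  | true =>
    refine hps (A ::ₘ Γ, some B) List.mem_cons_self (Multiset.forall_mem_cons.mpr ⟨hA, ?_⟩)
    exact fun X hX => (hΓ (.box X) (Multiset.mem_map_of_mem Fml.box hX)).2 rfl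

theorem Derives.slashValid (hax : ∀ A, Ax A → ∀ σ : α → Fml α, Slash Ax refl T (A.subst σ))
    {Γ : Multiset (Fml α)} {Δ : Option (Fml α)} (h : Derives (CKSys Ax) Γ Δ) :
    SlashValid Ax refl T Γ Δ := by
  induction h with
  | step hr hp ih =>
    have hc := Derives.step hr hp
    rcases hr with hr | hr | hr | ⟨-, A, σ, hA, rfl⟩
    · exact .of_ljRule hr hc ih
    · exact .of_kBoxRule hr hc ih
    · exact .of_kDiaRule hr hc ih
    · exact fun _ => hax A hA σ

end Slash

def evalNode (refl : Bool) (v : α → Bool) : Fml α → Bool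
  | .atom a => v a
  | .top => true
  | .bot => false
  | .and A B => evalNode refl v A && evalNode refl v B
  | .or A B => evalNode refl v A || evalNode refl v B
  | .imp A B => !evalNode refl v A || evalNode refl v B
  | .box A => !refl || evalNode refl v A
  | .dia A => refl && evalNode refl v A

theorem evalNode_false : evalNode false = (evalI : (α → Bool) → Fml α → Bool) := by
  funext v A
  induction A <;> simp [evalNode, evalI, *]

theorem evalNode_true : evalNode true = (evalR : (α → Bool) → Fml α → Bool) := by
  funext v A
  induction A <;> simp [evalNode, evalR, *]

theorem evalNode_subst (refl : Bool) (v : α → Bool) (σ : α → Fml α) (A : Fml α) :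
    evalNode refl v (A.subst σ) = evalNode refl (fun a => evalNode refl v (σ a)) A := by
  induction A <;> simp [Fml.subst, evalNode, *]

open Classical in
noncomputable def slashValuation (Ax : Fml α → Prop) (refl : Bool) (T : Multiset (Fml α))
    (σ : α → Fml α) (a : α) : Bool :=
  decide (Slash Ax refl T (σ a))

section Semantics

variable {Ax : Fml α → Prop} {refl : Bool} {T : Multiset (Fml α)} {σ : α → Fml α}

theorem Basic.slash_subst_iff (hcon : ¬Derives (CKSys Ax) T (some .bot))
    (hdia : refl = true → ∀ X : Fml α, Derives (CKSys Ax) 0 (some (.imp X (.dia X))))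
    {B : Fml α} (hB : Basic B) :
    Slash Ax refl T (B.subst σ) ↔ evalNode refl (slashValuation Ax refl T σ) B = true := by
  induction hB with
  | atom a => simp [Fml.subst, evalNode, slashValuation]
  | top => simp [Fml.subst, evalNode, Slash]
  | bot => simpa [Fml.subst, evalNode, Slash] using hcon
  | and _ _ ihA ihB => simp [Fml.subst, evalNode, Slash, ihA, ihB]
  | or _ _ ihA ihB => simp [Fml.subst, evalNode, Slash, ihA, ihB]
  | @dia A _ ihA =>
    cases refl with
    | false => simpa [Fml.subst, evalNode, Slash] using fun _ => hcon
    | true =>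
      simp only [Fml.subst, Slash, if_true, evalNode, Bool.true_and, ← ihA]
      exact ⟨And.right, fun h => ⟨(Derives.weaken_zero (hdia rfl _)).mp h.derives, h⟩⟩

theorem AlmostPos.eval_of_slash_subst (hcon : ¬Derives (CKSys Ax) T (some .bot))
    (hdia : refl = true → ∀ X : Fml α, Derives (CKSys Ax) 0 (some (.imp X (.dia X))))
    {A : Fml α} (hA : AlmostPos A) (h : Slash Ax refl T (A.subst σ)) :
    evalNode refl (slashValuation Ax refl T σ) A = true := by
  induction hA with
  | basic hB => exact (hB.slash_subst_iff hcon hdia).mp h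
  | and _ _ ihA ihB => simp [evalNode, ihA h.1, ihB h.2]
  | or _ _ ihA ihB => rcases h with h | h <;> simp [evalNode, ihA, ihB, h]
  | box _ ihA =>
    cases refl with
    | false => rfl
    | true => simp [evalNode, ihA (h.2 rfl)]
  | dia _ ihA =>
    cases refl with
    | false => exact absurd h.2 hcon
    | true => simp [evalNode, ihA h.2]
  | @imp A' B' hA' _ ihB' =>
    cases hb : evalNode refl (slashValuation Ax refl T σ) A'
    · simp [evalNode, hb]
    · simp [evalNode, ihB' (h.2 ((hA'.slash_subst_iff hcon hdia).mpr hb))]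

theorem Constructive.slash_subst_of_eval (hcon : ¬Derives (CKSys Ax) T (some .bot))
    (hbox : refl = true → ∀ X : Fml α, Derives (CKSys Ax) 0 (some (.imp (.box X) X)))
    (hdia : refl = true → ∀ X : Fml α, Derives (CKSys Ax) 0 (some (.imp X (.dia X))))
    {C : Fml α} (hC : Constructive C) (hd : Derives (CKSys Ax) T (some (C.subst σ)))
    (he : evalNode refl (slashValuation Ax refl T σ) C = true) :
    Slash Ax refl T (C.subst σ) := by
  induction hC with
  | basic hB => exact (hB.slash_subst_iff hcon hdia).mpr he
  | and _ _ ih₁ ih₂ =>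
    simp only [evalNode, Bool.and_eq_true] at he
    exact ⟨ih₁ hd.and_left he.1, ih₂ hd.and_right he.2⟩
  | box _ ih =>
    refine ⟨hd, fun hrefl => ?_⟩
    subst hrefl
    exact ih ((Derives.weaken_zero (hbox rfl _)).mp hd) (by simpa [evalNode] using he)
  | imp hA _ ih =>
    refine ⟨hd, fun hs => ih (hd.mp hs.derives) ?_⟩
    simpa [evalNode, hA.eval_of_slash_subst hcon hdia hs] using he

end Semantics

def VisserRules (R : RuleSet α) : Prop :=
  ∀ (AB : List (Fml α × Fml α)) (C D : Fml α),
    Derives R 0 (some (.imp (impConj AB) (.or C D))) →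
    Derives R 0 (some (.imp (impConj AB) C)) ∨ Derives R 0 (some (.imp (impConj AB) D)) ∨
      ∃ p ∈ AB, Derives R 0 (some (.imp (impConj AB) p.1))

theorem VisserRules.disjProp {R : RuleSet α} [ExtendsLJ R] (h : VisserRules R) : DisjProp R := by
  intro C D hCD
  rcases h [] C D (Derives.imp_intro (hCD.weaken_cons _)) with hC | hD | ⟨_, hp, -⟩
  · exact .inl (hC.mp .top)
  · exact .inr (hD.mp .top)
  · cases hp

section Visser

variable {Ax : Fml α → Prop} {refl : Bool}

theorem Derives.axiom_subst {A : Fml α} (hA : Ax A) (σ : α → Fml α) :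
    Derives (CKSys Ax) 0 (some (A.subst σ)) :=
  .step (c := (0, some (A.subst σ))) (Or.inr (Or.inr (Or.inr ⟨rfl, A, σ, hA, rfl⟩))) (by simp)

theorem slash_axiom_subst {T : Multiset (Fml α)} (hconstr : ∀ A, Ax A → Constructive A)
    (hvalid : ∀ Γ Δ, Derives (CKSys Ax) Γ Δ → SeqValid (evalNode refl) Γ Δ)
    (hcon : ¬Derives (CKSys Ax) T (some .bot))
    (hbox : refl = true → ∀ X : Fml α, Derives (CKSys Ax) 0 (some (.imp (.box X) X)))
    (hdia : refl = true → ∀ X : Fml α, Derives (CKSys Ax) 0 (some (.imp X (.dia X))))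
    {A : Fml α} (hA : Ax A) (σ : α → Fml α) : Slash Ax refl T (A.subst σ) := by
  set v := slashValuation Ax refl T σ
  have htrue : evalNode refl v A = true := by
    let τ : α → Fml α := fun a => if v a then .top else .bot
    obtain ⟨B, hB, hBtrue⟩ := hvalid 0 _ (Derives.axiom_subst hA τ) (fun _ => true) (by simp)
    obtain rfl := Option.some_injective _ hB
    have hτ : (fun a => evalNode refl (fun _ => true) (τ a)) = v := by
      funext a
      simp only [τ]
      cases v a <;> rfl
    rwa [evalNode_subst, hτ] at hBtrue
  exact (hconstr A hA).slash_subst_of_eval hcon hbox hdia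
    (Derives.weaken_zero (Derives.axiom_subst hA σ)) htrue

theorem visserRules_of_constructive (hconstr : ∀ A, Ax A → Constructive A)
    (hvalid : ∀ Γ Δ, Derives (CKSys Ax) Γ Δ → SeqValid (evalNode refl) Γ Δ)
    (hbox : refl = true → ∀ X : Fml α, Derives (CKSys Ax) 0 (some (.imp (.box X) X)))
    (hdia : refl = true → ∀ X : Fml α, Derives (CKSys Ax) 0 (some (.imp X (.dia X)))) :
    VisserRules (CKSys Ax) := by
  intro AB C D h
  simp only [← derives_imps_iff] at h ⊢
  by_cases hcon : Derives (CKSys Ax) (imps AB) (some .bot)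
  · exact .inl hcon.exfalso
  have hax : ∀ A, Ax A → ∀ σ, Slash Ax refl (imps AB) (A.subst σ) :=
    fun _ => slash_axiom_subst hconstr hvalid hcon hbox hdia
  by_cases hall : ∀ p ∈ AB, Slash Ax refl (imps AB) (.imp p.1 p.2)
  · have hCD : Slash Ax refl (imps AB) (.or C D) := h.slashValid hax fun X hX => by
      obtain ⟨p, hp, rfl⟩ := List.mem_map.mp (Multiset.mem_coe.mp hX)
      exact hall p hp
    exact hCD.imp Slash.derives (Or.inl ∘ Slash.derives)
  · push Not at hall
    obtain ⟨p, hp, hnot⟩ := hall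
    -- `imps AB` derives `p.1 → p.2`, so the slash can only fail at the antecedent.
    have hp₁ : Slash Ax refl (imps AB) p.1 := by
      by_contra hp₁
      exact hnot ⟨.of_mem (Multiset.mem_coe.mpr (List.mem_map_of_mem hp)), (absurd · hp₁)⟩
    exact .inr (.inr ⟨p, hp, hp₁.derives⟩)

end Visser

theorem TFull.derives_box_imp {Ax : Fml α → Prop} [Inhabited α] (h : TFull Ax) (X : Fml α) :
    Derives (CKSys Ax) 0 (some (.imp (.box X) X)) := by
  simpa [Fml.subst] using (h.2.1 default).subst fun _ => X

theorem TFull.derives_imp_dia {Ax : Fml α → Prop} [Inhabited α] (h : TFull Ax) (X : Fml α) :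
    Derives (CKSys Ax) 0 (some (.imp X (.dia X))) := by
  simpa [Fml.subst] using (h.2.2 default).subst fun _ => X

/-- Let `𝒞` be a finite set of constructive formulas and let
`G = CK+𝒞` be either T-free or T-full.  Then the logic of `G` admits all
Visser's rules; in particular `G` has the disjunction property. -/
theorem statement_1 (CS : Finset (Fml ℕ)) (hCS : ∀ A ∈ CS, Constructive A)
    (hTF : TFree (· ∈ CS) ∨ TFull (· ∈ CS)) :
    (∀ (AB : List (Fml ℕ × Fml ℕ)) (C D : Fml ℕ),
      Derives (CKSys (· ∈ CS)) 0 (some (.imp (impConj AB) (.or C D))) →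
      Derives (CKSys (· ∈ CS)) 0 (some (.imp (impConj AB) C)) ∨
      Derives (CKSys (· ∈ CS)) 0 (some (.imp (impConj AB) D)) ∨
      ∃ p ∈ AB, Derives (CKSys (· ∈ CS)) 0 (some (.imp (impConj AB) p.1))) ∧
    (∀ C D : Fml ℕ,
      Derives (CKSys (· ∈ CS)) 0 (some (.or C D)) →
      Derives (CKSys (· ∈ CS)) 0 (some C) ∨ Derives (CKSys (· ∈ CS)) 0 (some D)) := by
  have visser : VisserRules (CKSys (· ∈ CS)) := by
    rcases hTF with hfree | hfull
    · exact visserRules_of_constructive (refl := false) hCS (evalNode_false ▸ hfree) nofun nofun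
    · exact visserRules_of_constructive (refl := true) hCS (evalNode_true ▸ hfull.1)
        (fun _ => hfull.derives_box_imp) (fun _ => hfull.derives_imp_dia)
  exact ⟨visser, visser.disjProp⟩

end UPT
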